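/- arXiv:math/0207303 — 2 statements merged into one kernel-verified Lean document; each statement's English description precedes it below -/
import Mathlib

section
/- For all x, y ∈ A₀: (θ⁻¹x) ⋆ (θ⁻¹y) = θ⁻¹(x ⋆ y), where a⋆b := (id⊗ψ)((1⊗b)(id⊗S⁻¹)(Δ(a))) is the convolution product on A₀. -/
noncomputable section

open Matrix Filter
open scoped Kronecker ComplexConjugate ComplexOrder

namespace DQG

variable {I : Type*} [DecidableEq I]

abbrev Mat (n : I → ℕ) (α : I) := Matrix (Fin (n α)) (Fin (n α)) ℂ
abbrev MA (n : I → ℕ) := ∀ α, Mat n α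
abbrev MAA (n : I → ℕ) :=
  ∀ p : I × I, Matrix (Fin (n p.1) × Fin (n p.2)) (Fin (n p.1) × Fin (n p.2)) ℂ

variable (n : I → ℕ)

/-- blockwise Kronecker product: the image of `a ⊗ b` in `M(A₀ ⊗ A₀)`. -/
def tens (a b : MA n) : MAA n := fun p => (a p.1) ⊗ₖ (b p.2)

/-- membership in the algebraic direct sum `A₀ ⊆ M(A₀)`: finite support. -/
def inA0 (a : MA n) : Prop := {α : I | a α ≠ 0}.Finite

/-- membership in `A₀ ⊗_alg A₀ ⊆ M(A₀ ⊗ A₀)`: finite support. -/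
def inA00 (X : MAA n) : Prop := {p : I × I | X p ≠ 0}.Finite

/-- the central projection `e_α` (unit of the block `M_{n_α}`). -/
def eU (α : I) : MA n := Pi.single α 1

/-- matrix unit `e^α_{ij}`. -/
def eE (α : I) (i j : Fin (n α)) : MA n := Pi.single α (Matrix.single i j 1)

/-- the slice `(id ⊗ f)(X)` for a functional `f` applied to the second leg. -/
def rSlice (f : MA n → ℂ) (X : MAA n) : MA n :=
  fun α => Matrix.of fun i j => f (fun β => Matrix.of fun k l => X (α, β) (i, k) (j, l))

/-- the slice `(f ⊗ id)(X)` for a functional `f` applied to the first leg. -/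
def lSlice (f : MA n → ℂ) (X : MAA n) : MA n :=
  fun β => Matrix.of fun k l => f (fun α => Matrix.of fun i j => X (α, β) (i, k) (j, l))

/-- the left invariant functional `φ(x) = Σ_α Tr(K_α⁻¹ x_α)`. -/
def phi (Km : MA n) (a : MA n) : ℂ := ∑' α, ((Km α)⁻¹ * a α).trace

/-- the right invariant functional `ψ(x) = Σ_α c_α Tr(K_α x_α)`. -/
def psi (Km : MA n) (c : I → ℝ) (a : MA n) : ℂ := ∑' α, (c α : ℂ) * ((Km α) * a α).trace

/-- the convolution `a ⋆ b = (id ⊗ (ψ∘S⁻¹))(Δ(a)(1 ⊗ S(b)))`. -/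
def conv (Δ : MA n →ₐ[ℂ] MAA n) (S : MA n ≃ₗ[ℂ] MA n) (ψ : MA n → ℂ) (a b : MA n) : MA n :=
  rSlice n (fun x => ψ (S.symm x)) (Δ a * tens n 1 (S b))

/-- the involution `a^♯ = θ⁻² S⁻¹(a*)`. -/
def sharp (S : MA n ≃ₗ[ℂ] MA n) (θ : MA n) (a : MA n) : MA n :=
  θ⁻¹ * θ⁻¹ * S.symm (star a)

/-- the map `T₁`, `a ⊗ b ↦ Δ(a)(1 ⊗ b)`, written out on `A₀ ⊗_alg A₀ ⊆ M(A₀ ⊗ A₀)`. -/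
def T1map (Δ : MA n →ₐ[ℂ] MAA n) (X : MAA n) : MAA n :=
  fun p => Matrix.of fun r s =>
    ∑' q : I × I, ∑ i : Fin (n q.1), ∑ j : Fin (n q.1), ∑ u : Fin (n q.2), ∑ v : Fin (n q.2),
      X q (i, u) (j, v) * (Δ (eE n q.1 i j) * tens n 1 (eE n q.2 u v)) p r s

/-- the map `T₂`, `a ⊗ b ↦ (a ⊗ 1)Δ(b)`, written out on `A₀ ⊗_alg A₀ ⊆ M(A₀ ⊗ A₀)`. -/
def T2map (Δ : MA n →ₐ[ℂ] MAA n) (X : MAA n) : MAA n :=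
  fun p => Matrix.of fun r s =>
    ∑' q : I × I, ∑ i : Fin (n q.1), ∑ j : Fin (n q.1), ∑ u : Fin (n q.2), ∑ v : Fin (n q.2),
      X q (i, u) (j, v) * (tens n (eE n q.1 i j) 1 * Δ (eE n q.2 u v)) p r s



/-- the Hilbert space `K = ℓ²-⊕_α ℂ^{n_α}`. -/
abbrev KS := lp (fun α : I => EuclideanSpace ℂ (Fin (n α))) 2

/-- the canonical basis vector of `K` sitting in block `α` at position `i`. -/
def bas (α : I) (i : Fin (n α)) : KS n := lp.single 2 α (EuclideanSpace.single i (1 : ℂ))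

variable {H HK : Type*}
  [NormedAddCommGroup H] [InnerProductSpace ℂ H] [CompleteSpace H]
  [NormedAddCommGroup HK] [InnerProductSpace ℂ HK] [CompleteSpace HK]

/-- the slice `T_{ξη}(U) ∈ M(A₀)`, with entries `⟨ξ ⊗ e^α_i , U (η ⊗ e^α_j)⟩`. -/
def TU (tm : H →L[ℂ] KS n →L[ℂ] HK) (U : HK →L[ℂ] HK) (ξ η : H) : MA n :=
  fun α => Matrix.of fun i j =>
    (inner ℂ (tm ξ (bas n α i)) (U (tm η (bas n α j))) : ℂ)

/-- the slice `(id ⊗ φ_J)(X)` of an operator `X` on `H ⊗ K`, for `φ_J = φ(e_J ·)`. -/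
def slicePhi (Km : MA n) (tm : H →L[ℂ] KS n →L[ℂ] HK) (J : Finset I) (X : HK →L[ℂ] HK) :
    H →L[ℂ] H :=
  ∑ α ∈ J, ∑ i : Fin (n α), ∑ j : Fin (n α),
    ((Km α)⁻¹ j i) •
      ((ContinuousLinearMap.adjoint (tm.flip (bas n α i))) ∘L X ∘L (tm.flip (bas n α j)))

/-- `H`-valued matrices: the concrete model of `H ⊗_alg A₀` (and its multiplier version). -/
abbrev F0 (H : Type*) := ∀ α : I, Matrix (Fin (n α)) (Fin (n α)) H

/-- the element `η ⊗ a ∈ H ⊗_alg A₀`. -/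
def elm (η : H) (a : MA n) : F0 n H := fun α => Matrix.of fun i j => (a α i j) • η

/-- the coefficient operators `X^α_{ij}` of `X = (h ⊗ θ⁻¹)U ∈ B(H) ⊗ M(A₀)`. -/
def SigCoef (tm : H →L[ℂ] KS n →L[ℂ] HK) (U : HK →L[ℂ] HK) (θ : MA n)
    (hop : H →L[ℂ] H) (α : I) (i j : Fin (n α)) : H →L[ℂ] H :=
  hop ∘L
    (ContinuousLinearMap.adjoint
      (tm.flip (lp.single 2 α
        (Matrix.toEuclideanLin ((θ α)⁻¹)ᴴ (EuclideanSpace.single i (1 : ℂ)))))) ∘L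
    U ∘L (tm.flip (bas n α j))

/-- the map `Σ : H₀ → H ⊗_alg A₀`, `Σ(ξ) = ((h ⊗ θ⁻¹)U)(ξ ⊗ 1)`. -/
def Sig (tm : H →L[ℂ] KS n →L[ℂ] HK) (U : HK →L[ℂ] HK) (θ : MA n)
    (hop : H →L[ℂ] H) (ξ : H) : F0 n H :=
  fun α => Matrix.of fun i j => SigCoef n tm U θ hop α i j ξ


/-- the right `Â₀`-module action on `H ⊗_alg A₀`: `(ξ ⊗ x)·b := ξ ⊗ (x ⋆ b)`. -/
def modAct (Δ : MA n →ₐ[ℂ] MAA n) (S : MA n ≃ₗ[ℂ] MA n) (ψ : MA n → ℂ)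
    {H : Type*} [NormedAddCommGroup H] [Module ℂ H]
    (x : F0 n H) (b : MA n) : F0 n H :=
  fun β => Matrix.of fun k l =>
    ∑' α : I, ∑ i : Fin (n α), ∑ j : Fin (n α),
      (conv n Δ S ψ (eE n α i j) b β k l) • x α i j

/-- the `Â₀`-valued inner product on `F₀ = H ⊗_alg Â₀`:
`⟨ξ ⊗ a, η ⊗ b⟩ = ⟨ξ, η⟩ (a^♯ ⋆ b)`. -/
def ipF0 (Δ : MA n →ₐ[ℂ] MAA n) (S : MA n ≃ₗ[ℂ] MA n) (ψ : MA n → ℂ) (θ : MA n)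
    {H : Type*} [NormedAddCommGroup H] [InnerProductSpace ℂ H]
    (x y : F0 n H) : MA n :=
  fun γ => Matrix.of fun r s =>
    ∑' p : I × I, ∑ i : Fin (n p.1), ∑ j : Fin (n p.1), ∑ k : Fin (n p.2), ∑ l : Fin (n p.2),
      (inner ℂ (x p.1 i j) (y p.2 k l) : ℂ) *
        (conv n Δ S ψ (sharp n S θ (eE n p.1 i j)) (eE n p.2 k l) γ r s)

/-- `X ⋆ a := Σᵢ xᵢ ⊗ (id ⊗ (ψ_a ∘ S⁻¹))(Δ(bᵢ))` for `X = Σᵢ xᵢ ⊗ bᵢ ∈ B(H) ⊗_alg A₀`. -/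
def opStar (Δ : MA n →ₐ[ℂ] MAA n) (S : MA n ≃ₗ[ℂ] MA n) (ψ : MA n → ℂ)
    {H : Type*} [NormedAddCommGroup H] [InnerProductSpace ℂ H] [CompleteSpace H]
    (X : ∀ α : I, Matrix (Fin (n α)) (Fin (n α)) (H →L[ℂ] H)) (a : MA n) :
    ∀ α : I, Matrix (Fin (n α)) (Fin (n α)) (H →L[ℂ] H) :=
  fun β => Matrix.of fun k l =>
    ∑' α : I, ∑ i : Fin (n α), ∑ j : Fin (n α),
      (rSlice n (fun x => ψ (a * S.symm x)) (Δ (eE n α i j)) β k l) • X α i j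

set_option linter.unusedSectionVars false
section helpers

variable {I : Type*} [DecidableEq I] (n : I → ℕ)

lemma tens_mul (a b c d : MA n) : tens n a b * tens n c d = tens n (a * c) (b * d) := by
  funext p
  simp only [tens, Pi.mul_apply, ← Matrix.mul_kronecker_mul]

lemma psi_summable (Km : MA n) (c : I → ℝ) {a : MA n} (ha : inA0 n a) :
    Summable (fun α => (c α : ℂ) * ((Km α) * a α).trace) := by
  apply summable_of_ne_finset_zero (s := ha.toFinset)
  intro β hb
  have : a β = 0 := by by_contra h; exact hb (ha.mem_toFinset.mpr h)
  simp [this]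

lemma psi_sum {ι : Type*} (Km : MA n) (c : I → ℝ) (s : Finset ι) (g : ι → MA n)
    (hg : ∀ i ∈ s, inA0 n (g i)) :
    psi n Km c (∑ i ∈ s, g i) = ∑ i ∈ s, psi n Km c (g i) := by
  unfold psi
  rw [← Summable.tsum_finsetSum (fun i hi => psi_summable n Km c (hg i hi))]
  congr 1
  funext α
  simp [Finset.sum_apply, Matrix.mul_sum, Matrix.trace_sum, Finset.mul_sum]

lemma psi_smul (Km : MA n) (c : I → ℝ) (r : ℂ) (a : MA n) :
    psi n Km c (r • a) = r * psi n Km c a := by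
  unfold psi
  rw [← tsum_mul_left]
  congr 1
  funext α
  simp [Matrix.mul_smul, Matrix.trace_smul, smul_eq_mul]
  ring

variable (S : MA n ≃ₗ[ℂ] MA n) (σ : I ≃ I)
variable (hSblock : ∀ (a : MA n) (α : I), S a (σ α) = S (Pi.single α (a α)) (σ α))

include hSblock in
lemma S_single_supp (α : I) (m : Mat n α) {β : I} (hβ : β ≠ σ α) :
    S (Pi.single α m) β = 0 := by
  obtain ⟨γ, rfl⟩ : ∃ γ, β = σ γ := ⟨σ.symm β, (σ.apply_symm_apply β).symm⟩
  have hγ : γ ≠ α := fun h => hβ (by rw [h])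
  rw [hSblock, Pi.single_eq_of_ne hγ, Pi.single_zero, map_zero]
  rfl

include hSblock in
lemma S_supp {a : MA n} (ha : inA0 n a) : inA0 n (S a) := by
  apply Set.Finite.subset (ha.image σ)
  intro β hβ
  obtain ⟨γ, rfl⟩ : ∃ γ, β = σ γ := ⟨σ.symm β, (σ.apply_symm_apply β).symm⟩
  by_cases h : a γ = 0
  · exact absurd (by rw [hSblock, h, Pi.single_zero, map_zero]; rfl) hβ
  · exact ⟨γ, h, rfl⟩

include hSblock in
lemma Ssymm_supp {b : MA n} (hb : inA0 n b) : inA0 n (S.symm b) := by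
  apply Set.Finite.subset (hb.image σ.symm)
  intro γ hγ
  refine ⟨σ γ, ?_, σ.symm_apply_apply γ⟩
  show b (σ γ) ≠ 0
  have hb' : b (σ γ) = S (S.symm b) (σ γ) := by rw [S.apply_symm_apply]
  rw [hb', hSblock]
  intro h0
  have hall : S (Pi.single γ (S.symm b γ)) = 0 := by
    funext β
    by_cases hβ : β = σ γ
    · rw [hβ]; exact h0
    · exact S_single_supp n S σ hSblock γ _ hβ
  have h1 : Pi.single γ (S.symm b γ) = (0 : MA n) := by
    apply S.injective; rw [hall, map_zero]
  apply hγ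
  have := congrFun h1 γ
  simpa [Pi.single_eq_same] using this

lemma slice_supp {X : MAA n} (hX : inA00 n X) (α : I) (i j : Fin (n α)) :
    inA0 n (fun β => Matrix.of fun k l => X (α, β) (i, k) (j, l)) := by
  have hsub : {β | (fun β => (Matrix.of fun k l => X (α, β) (i, k) (j, l))) β ≠ 0}
      ⊆ (fun β => (α, β)) ⁻¹' {p | X p ≠ 0} := by
    intro β h hc
    apply h
    ext k l
    simp [show X (α, β) = 0 from hc]
  refine Set.Finite.subset (Set.Finite.preimage ?_ hX) hsub
  exact Function.Injective.injOn (fun β₁ β₂ h => (Prod.ext_iff.mp h).2)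

lemma conj_supp (θ : MA n) {X : MAA n} (hX : inA00 n X) :
    inA00 n (tens n 1 θ⁻¹ * X * tens n 1 θ) := by
  apply Set.Finite.subset hX
  intro p hp
  by_contra h
  apply hp
  have : X p = 0 := not_not.mp h
  simp [Pi.mul_apply, this]

end helpers
section helpers2
set_option linter.unusedSectionVars false
set_option maxHeartbeats 1000000

variable {I : Type*} [DecidableEq I] (n : I → ℕ)
variable (S : MA n ≃ₗ[ℂ] MA n) (σ : I ≃ I)
variable (hSblock : ∀ (a : MA n) (α : I), S a (σ α) = S (Pi.single α (a α)) (σ α))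
variable (Km : MA n) (c : I → ℝ) (θ : MA n)

lemma smul_inA0 (r : ℂ) {b : MA n} (hb : inA0 n b) : inA0 n (r • b) := by
  apply Set.Finite.subset hb
  intro β h hc
  exact h (by simp [Pi.smul_apply, hc])

include hSblock in
lemma rSlice_tens_left (a : MA n) {Z : MAA n} (hZ : inA00 n Z) :
    rSlice n (fun m => psi n Km c (S.symm m)) (tens n a 1 * Z)
      = a * rSlice n (fun m => psi n Km c (S.symm m)) Z := by
  funext α
  ext i j
  have hslice : (fun β => Matrix.of fun k l => (tens n a 1 * Z) (α, β) (i, k) (j, l))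
      = ∑ i' : Fin (n α), a α i i' •
          (fun β => Matrix.of fun k l => Z (α, β) (i', k) (j, l)) := by
    funext β
    ext k l
    simp only [Pi.mul_apply, tens, Matrix.mul_apply, Matrix.kroneckerMap_apply,
      Matrix.of_apply, Finset.sum_apply, Matrix.sum_apply, Pi.smul_apply,
      Matrix.smul_apply, smul_eq_mul,
      Fintype.sum_prod_type, Matrix.one_apply, Pi.one_apply, mul_ite, ite_mul,
      mul_one, mul_zero, zero_mul, one_mul, Finset.sum_ite_eq, Finset.sum_ite_eq',
      Finset.mem_univ, if_true]
  simp only [rSlice, Matrix.of_apply]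
  rw [hslice]
  rw [map_sum]
  simp only [_root_.map_smul]
  rw [psi_sum n Km c _ _ (fun i' _ => smul_inA0 n _
    (Ssymm_supp n S σ hSblock (slice_supp n hZ α i' j)))]
  simp only [psi_smul]
  simp only [Pi.mul_apply, Matrix.mul_apply, rSlice, Matrix.of_apply]

include hSblock in
lemma rSlice_conj
    (hS2 : ∀ a : MA n, inA0 n a → S (S a) = θ⁻¹ * a * θ)
    (hpsiS2 : ∀ a : MA n, inA0 n a → psi n Km c (S (S a)) = psi n Km c a)
    {X : MAA n} (hX : inA00 n X) :
    rSlice n (fun m => psi n Km c (S.symm m)) (tens n 1 θ⁻¹ * X * tens n 1 θ)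
      = rSlice n (fun m => psi n Km c (S.symm m)) X := by
  funext α
  ext i j
  set m : MA n := fun β => Matrix.of fun k l => X (α, β) (i, k) (j, l) with hm
  have hmfin : inA0 n m := slice_supp n hX α i j
  have hslice : (fun β => Matrix.of fun k l =>
        (tens n 1 θ⁻¹ * X * tens n 1 θ) (α, β) (i, k) (j, l))
      = θ⁻¹ * m * θ := by
    funext β
    ext k l
    simp only [hm, Pi.mul_apply, tens, Matrix.mul_apply, Matrix.kroneckerMap_apply,
      Matrix.of_apply, Fintype.sum_prod_type, Matrix.one_apply, Pi.one_apply,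
      mul_ite, ite_mul, mul_one, mul_zero, zero_mul, one_mul,
      Finset.sum_ite_eq, Finset.sum_ite_eq', Finset.mem_univ, if_true,
      Finset.sum_mul, Finset.mul_sum, Pi.inv_apply]
    rw [Finset.sum_comm]
    refine Finset.sum_congr rfl fun y _ => ?_
    rw [Finset.sum_eq_single j]
    · rw [Finset.sum_eq_single i]
      · simp
      · intro x hx hne
        simp [Ne.symm hne]
      · exact fun h => absurd (Finset.mem_univ i) h
    · intro x hx hne
      rw [if_neg hne]
    · exact fun h => absurd (Finset.mem_univ j) h
  simp only [rSlice, Matrix.of_apply]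
  rw [hslice, ← hS2 m hmfin, LinearEquiv.symm_apply_apply]
  have h := hpsiS2 (S.symm m) (Ssymm_supp n S σ hSblock hmfin)
  rwa [LinearEquiv.apply_symm_apply] at h

end helpers2
/-- `(θ⁻¹x) ⋆ (θ⁻¹y) = θ⁻¹(x ⋆ y)`. -/
theorem statement8
    {I : Type*} [DecidableEq I] (n : I → ℕ) (hn : ∀ α, 0 < n α)
    (Δ : MA n →ₐ[ℂ] MAA n)
    (hΔstar : ∀ a : MA n, Δ (star a) = star (Δ a))
    (hΔ1 : ∀ a b : MA n, inA0 n a → inA0 n b → inA00 n (Δ a * tens n 1 b))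
    (hΔ2 : ∀ a b : MA n, inA0 n a → inA0 n b → inA00 n (tens n a 1 * Δ b))
    (hT1 : Set.BijOn (T1map n Δ) {X | inA00 n X} {X | inA00 n X})
    (hT2 : Set.BijOn (T2map n Δ) {X | inA00 n X} {X | inA00 n X})
    (hcoass : ∀ (α β : I) (i j : Fin (n α)) (k l : Fin (n β)) (x : MA n),
      lSlice n (fun y => y β k l) (Δ (lSlice n (fun y => y α i j) (Δ x)))
        = lSlice n (fun y => (lSlice n (fun z => z α i j) (Δ y)) β k l) (Δ x))
    (S : MA n ≃ₗ[ℂ] MA n) (σ : I ≃ I)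
    (hSanti : ∀ a b : MA n, S (a * b) = S b * S a)
    (hSstar : ∀ a : MA n, star (S (star (S a))) = a)
    (hSe : ∀ α : I, S (eU n α) = eU n (σ α))
    (hSblock : ∀ (a : MA n) (α : I), S a (σ α) = S (Pi.single α (a α)) (σ α))
    (Km : MA n) (hK : ∀ α, (Km α).PosDef) (c : I → ℝ) (hc : ∀ α, 0 < c α)
    (hphiL : ∀ a b : MA n, inA0 n a → inA0 n b →
      rSlice n (phi n Km) (tens n b 1 * Δ a) = phi n Km a • b)
    (hpsiR : ∀ a b : MA n, inA0 n a → inA0 n b →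
      lSlice n (psi n Km c) (tens n 1 b * Δ a) = psi n Km c a • b)
    (θ : MA n) (hθ : ∀ α, (θ α).PosDef)
    (hθΔ : Δ θ = tens n θ θ) (hθinvΔ : Δ θ⁻¹ = tens n θ⁻¹ θ⁻¹)
    (hSθ : ∀ a : MA n, inA0 n a → S (θ * a) = S a * θ⁻¹)
    (hSθinv : ∀ a : MA n, inA0 n a → S (θ⁻¹ * a) = S a * θ)
    (hS2 : ∀ a : MA n, inA0 n a → S (S a) = θ⁻¹ * a * θ)
    (hpsiphi : ∀ a : MA n, inA0 n a →
      psi n Km c a = phi n Km (a * (θ * θ)) ∧ psi n Km c a = phi n Km ((θ * θ) * a))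
    (hphiS2 : ∀ a : MA n, inA0 n a → phi n Km (S (S a)) = phi n Km a)
    (hpsiS2 : ∀ a : MA n, inA0 n a → psi n Km c (S (S a)) = psi n Km c a)
    (x y : MA n) (hx : inA0 n x) (hy : inA0 n y) :
    conv n Δ S (psi n Km c) (θ⁻¹ * x) (θ⁻¹ * y)
      = θ⁻¹ * conv n Δ S (psi n Km c) x y := by
  have hSy : inA0 n (S y) := S_supp n S σ hSblock hy
  have hX : inA00 n (Δ x * tens n 1 (S y)) := hΔ1 x (S y) hx hSy
  have key : Δ (θ⁻¹ * x) * tens n 1 (S (θ⁻¹ * y))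
      = tens n θ⁻¹ 1 * (tens n 1 θ⁻¹ * (Δ x * tens n 1 (S y)) * tens n 1 θ) := by
    have h1 : tens n 1 (S y * θ) = tens n 1 (S y) * tens n 1 θ := by
      rw [tens_mul, one_mul]
    have h2 : tens n θ⁻¹ θ⁻¹ = tens n θ⁻¹ 1 * tens n 1 θ⁻¹ := by
      rw [tens_mul, one_mul, mul_one]
    rw [_root_.map_mul, hθinvΔ, hSθinv y hy, h1, h2]
    simp only [mul_assoc]
  unfold conv
  rw [key, rSlice_tens_left n S σ hSblock Km c θ⁻¹ (conj_supp n θ hX),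
    rSlice_conj n S σ hSblock Km c θ hS2 hpsiS2 hX]

end DQG

end
end

section
/- (Equivariant operators are module maps.) Let T ∈ B(H) satisfy U(T⊗1)U* = T⊗1 (equivalently (T⊗1)U = U(T⊗1)), and suppose that for every c ∈ C₀ there exist finitely many c₁,…,c_m ∈ C₀ and A₁,…,A_m ∈ B(H) with Tc = Σ_{k=1}^m c_k A_k. Then T(H₀) ⊆ H₀, T(ξ·a) = (Tξ)·a for all ξ ∈ H₀ and a ∈ A₀, and if moreover T is self-adjoint as a Hilbert space operator, then ⟨Tξ, η⟩_{Â₀} = ⟨ξ, Tη⟩_{Â₀} for all ξ, η ∈ H₀. -/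
noncomputable section

open Matrix Filter
open scoped Kronecker ComplexConjugate ComplexOrder

namespace DQG

variable {I : Type*} [DecidableEq I]

variable (n : I → ℕ)

variable {H HK : Type*}
  [NormedAddCommGroup H] [InnerProductSpace ℂ H] [CompleteSpace H]
  [NormedAddCommGroup HK] [InnerProductSpace ℂ HK] [CompleteSpace HK]

set_option maxHeartbeats 1600000 in
/-- equivariant operators with proper-support-type decompositions
are module maps on `H₀`, symmetric for the `Â₀`-valued inner ℂ product if self-adjoint. -/
theorem statement16
    {I : Type*} [DecidableEq I] (n : I → ℕ) (hn : ∀ α, 0 < n α)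
    (Δ : MA n →ₐ[ℂ] MAA n)
    (hΔstar : ∀ a : MA n, Δ (star a) = star (Δ a))
    (hΔ1 : ∀ a b : MA n, inA0 n a → inA0 n b → inA00 n (Δ a * tens n 1 b))
    (hΔ2 : ∀ a b : MA n, inA0 n a → inA0 n b → inA00 n (tens n a 1 * Δ b))
    (hT1 : Set.BijOn (T1map n Δ) {X | inA00 n X} {X | inA00 n X})
    (hT2 : Set.BijOn (T2map n Δ) {X | inA00 n X} {X | inA00 n X})
    (hcoass : ∀ (α β : I) (i j : Fin (n α)) (k l : Fin (n β)) (x : MA n),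
      lSlice n (fun y => y β k l) (Δ (lSlice n (fun y => y α i j) (Δ x)))
        = lSlice n (fun y => (lSlice n (fun z => z α i j) (Δ y)) β k l) (Δ x))
    (S : MA n ≃ₗ[ℂ] MA n) (σ : I ≃ I)
    (hSanti : ∀ a b : MA n, S (a * b) = S b * S a)
    (hSstar : ∀ a : MA n, star (S (star (S a))) = a)
    (hSe : ∀ α : I, S (eU n α) = eU n (σ α))
    (hSblock : ∀ (a : MA n) (α : I), S a (σ α) = S (Pi.single α (a α)) (σ α))
    (Km : MA n) (hK : ∀ α, (Km α).PosDef) (c : I → ℝ) (hc : ∀ α, 0 < c α)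
    (hphiL : ∀ a b : MA n, inA0 n a → inA0 n b →
      rSlice n (phi n Km) (tens n b 1 * Δ a) = phi n Km a • b)
    (hpsiR : ∀ a b : MA n, inA0 n a → inA0 n b →
      lSlice n (psi n Km c) (tens n 1 b * Δ a) = psi n Km c a • b)
    (θ : MA n) (hθ : ∀ α, (θ α).PosDef)
    (hθΔ : Δ θ = tens n θ θ) (hθinvΔ : Δ θ⁻¹ = tens n θ⁻¹ θ⁻¹)
    (hSθ : ∀ a : MA n, inA0 n a → S (θ * a) = S a * θ⁻¹)
    (hSθinv : ∀ a : MA n, inA0 n a → S (θ⁻¹ * a) = S a * θ)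
    (hS2 : ∀ a : MA n, inA0 n a → S (S a) = θ⁻¹ * a * θ)
    (hpsiphi : ∀ a : MA n, inA0 n a →
      psi n Km c a = phi n Km (a * (θ * θ)) ∧ psi n Km c a = phi n Km ((θ * θ) * a))
    (hphiS2 : ∀ a : MA n, inA0 n a → phi n Km (S (S a)) = phi n Km a)
    (hpsiS2 : ∀ a : MA n, inA0 n a → psi n Km c (S (S a)) = psi n Km c a)
    {H : Type*} [NormedAddCommGroup H] [InnerProductSpace ℂ H] [CompleteSpace H]
    [TopologicalSpace.SeparableSpace H]
    {HK : Type*} [NormedAddCommGroup HK] [InnerProductSpace ℂ HK] [CompleteSpace HK]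
    (tm : H →L[ℂ] KS n →L[ℂ] HK)
    (htmInner : ∀ (x y : H) (u v : KS n),
      (inner ℂ (tm x u) (tm y v) : ℂ) = (inner ℂ x y : ℂ) * (inner ℂ u v : ℂ))
    (htmDense :
      Dense (↑(Submodule.span ℂ (Set.range fun p : H × KS n => tm p.1 p.2)) : Set HK))
    (opT : (H →L[ℂ] H) → (KS n →L[ℂ] KS n) → (HK →L[ℂ] HK))
    (hopT : ∀ (A : H →L[ℂ] H) (B : KS n →L[ℂ] KS n) (x : H) (u : KS n),
      opT A B (tm x u) = tm (A x) (B u))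
    (ρ : MA n → KS n →L[ℂ] KS n)
    (hρ : ∀ a : MA n, inA0 n a → ∀ (α : I) (v : EuclideanSpace ℂ (Fin (n α))),
      ρ a (lp.single 2 α v) = lp.single 2 α (Matrix.toEuclideanLin (a α) v))
    (U : HK →L[ℂ] HK)
    (hUunit : ContinuousLinearMap.adjoint U ∘L U = 1 ∧ U ∘L ContinuousLinearMap.adjoint U = 1)
    (hUA : ∀ a : MA n, inA0 n a → ∃ (m : ℕ) (Ts : Fin m → H →L[ℂ] H) (as : Fin m → MA n),
      (∀ i, inA0 n (as i)) ∧ U ∘L opT 1 (ρ a) = ∑ i, opT (Ts i) (ρ (as i)))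
    (hAU : ∀ a : MA n, inA0 n a → ∃ (m : ℕ) (Ts : Fin m → H →L[ℂ] H) (as : Fin m → MA n),
      (∀ i, inA0 n (as i)) ∧ opT 1 (ρ a) ∘L U = ∑ i, opT (Ts i) (ρ (as i)))
    {ι : Type*} (bH : HilbertBasis ι ℂ H)
    (hUrep : ∀ (ξ η : H) (p : I × I) (r s : Fin (n p.1) × Fin (n p.2)),
      Δ (TU n tm U ξ η) p r s
        = ∑' m : ι, (TU n tm U ξ (bH m)) p.1 r.1 s.1 * (TU n tm U (bH m) η) p.2 r.2 s.2)
    (hUS : ∀ (ξ η : H) (a : MA n), inA0 n a →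
      S (TU n tm U ξ η * a) = S a * star (TU n tm U η ξ))
    (C0 : StarSubalgebra ℂ (H →L[ℂ] H))
    (hC0nd : Dense (↑(Submodule.span ℂ {y : H | ∃ c' ∈ C0, ∃ v : H, y = c' v}) : Set H))
    (hA1 : ∀ c₁ ∈ C0, ∀ c₂ ∈ C0, ∃ (m : ℕ) (cs : Fin m → H →L[ℂ] H) (as : Fin m → MA n),
      (∀ i, cs i ∈ C0) ∧ (∀ i, inA0 n (as i)) ∧
      U ∘L opT c₁ 1 ∘L ContinuousLinearMap.adjoint U ∘L opT c₂ 1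
        = ∑ i, opT (cs i) (ρ (as i)))
    (hA2 : ∀ c₁ ∈ C0, ∀ a : MA n, inA0 n a →
      ∃ (m : ℕ) (cs : Fin m → H →L[ℂ] H) (as : Fin m → MA n),
      (∀ i, cs i ∈ C0) ∧ (∀ i, inA0 n (as i)) ∧
      U ∘L opT c₁ 1 ∘L ContinuousLinearMap.adjoint U ∘L opT 1 (ρ a)
        = ∑ i, opT (cs i) (ρ (as i)))
    (act : H → MA n → H)
    (hact : ∀ (ξ : H) (a : MA n), inA0 n a → ∀ η' : H,
      (inner ℂ η' (act ξ a) : ℂ)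
        = psi n Km c ((θ⁻¹ * S a * (θ⁻¹ * θ⁻¹)) * TU n tm U η' ξ))
    (T : H →L[ℂ] H)
    (hTeq : U ∘L opT T 1 = opT T 1 ∘L U)
    (hTps : ∀ c₁ : H →L[ℂ] H, c₁ ∈ C0 → ∃ (m : ℕ) (cs As : Fin m → H →L[ℂ] H),
      (∀ i, cs i ∈ C0) ∧ T ∘L c₁ = ∑ i, cs i ∘L As i) :
    (∀ ξ : H, ξ ∈ Submodule.span ℂ {y : H | ∃ c' ∈ C0, ∃ v : H, y = c' v} → T ξ ∈ Submodule.span ℂ {y : H | ∃ c' ∈ C0, ∃ v : H, y = c' v}) ∧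
    (∀ ξ : H, ξ ∈ Submodule.span ℂ {y : H | ∃ c' ∈ C0, ∃ v : H, y = c' v} → ∀ a : MA n, inA0 n a → T (act ξ a) = act (T ξ) a) ∧
    (IsSelfAdjoint T → ∀ ξ η : H, ξ ∈ Submodule.span ℂ {y : H | ∃ c' ∈ C0, ∃ v : H, y = c' v} → η ∈ Submodule.span ℂ {y : H | ∃ c' ∈ C0, ∃ v : H, y = c' v} →
      θ⁻¹ * TU n tm U (T ξ) η = θ⁻¹ * TU n tm U ξ (T η)) := by
  classical
  -- the partial adjoint `A_u := (tm.flip u)†` satisfies `A_u (tm y v) = ⟨u,v⟩ • y`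
  have hA : ∀ (u v : KS n) (y : H),
      ContinuousLinearMap.adjoint (tm.flip u) (tm y v) = (inner ℂ u v : ℂ) • y := by
    intro u v y
    apply ext_inner_left ℂ
    intro x
    rw [ContinuousLinearMap.adjoint_inner_right]
    have h1 : tm.flip u x = tm x u := rfl
    rw [h1, htmInner, inner_smul_right]
    ring
  have hopT1 : ∀ (y : H) (v : KS n), opT T 1 (tm y v) = tm (T y) v := by
    intro y v
    have := hopT T 1 y v
    simpa using this
  -- key intertwining: `T ∘ A_u = A_u ∘ (T ⊗ 1)`
  have hkey : ∀ u : KS n,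
      T ∘L ContinuousLinearMap.adjoint (tm.flip u)
        = ContinuousLinearMap.adjoint (tm.flip u) ∘L opT T 1 := by
    intro u
    apply ContinuousLinearMap.ext_on htmDense
    rintro z ⟨⟨y, v⟩, rfl⟩
    simp only [ContinuousLinearMap.comp_apply]
    rw [hopT1, hA, hA]
    exact T.map_smul _ _
  have hcomm : ∀ z : HK, U (opT T 1 z) = opT T 1 (U z) := by
    intro z
    have := ContinuousLinearMap.ext_iff.mp hTeq z
    simpa using this
  -- TU intertwining
  have hTU1 : ∀ (η' ξ : H),
      TU n tm U (ContinuousLinearMap.adjoint T η') ξ = TU n tm U η' (T ξ) := by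
    intro η' ξ
    funext α
    ext i j
    simp only [TU, Matrix.of_apply]
    have hkeyi := ContinuousLinearMap.ext_iff.mp (hkey (bas n α i))
    calc (inner ℂ (tm (ContinuousLinearMap.adjoint T η') (bas n α i))
            (U (tm ξ (bas n α j))) : ℂ)
        = inner ℂ (tm.flip (bas n α i) (ContinuousLinearMap.adjoint T η'))
            (U (tm ξ (bas n α j))) := rfl
      _ = inner ℂ (ContinuousLinearMap.adjoint T η')
            (ContinuousLinearMap.adjoint (tm.flip (bas n α i)) (U (tm ξ (bas n α j)))) :=
          (ContinuousLinearMap.adjoint_inner_right _ _ _).symm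
      _ = inner ℂ η' (T (ContinuousLinearMap.adjoint (tm.flip (bas n α i))
            (U (tm ξ (bas n α j))))) := ContinuousLinearMap.adjoint_inner_left _ _ _
      _ = inner ℂ η' ((T ∘L ContinuousLinearMap.adjoint (tm.flip (bas n α i)))
            (U (tm ξ (bas n α j)))) := rfl
      _ = inner ℂ η' ((ContinuousLinearMap.adjoint (tm.flip (bas n α i)) ∘L opT T 1)
            (U (tm ξ (bas n α j)))) := by rw [hkeyi]
      _ = inner ℂ (tm.flip (bas n α i) η')
            (opT T 1 (U (tm ξ (bas n α j)))) := by
          rw [ContinuousLinearMap.comp_apply, ContinuousLinearMap.adjoint_inner_right]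
      _ = inner ℂ (tm η' (bas n α i)) (U (opT T 1 (tm ξ (bas n α j)))) := by
          rw [hcomm]; rfl
      _ = (inner ℂ (tm η' (bas n α i)) (U (tm (T ξ) (bas n α j))) : ℂ) := by
          rw [hopT1]
  refine ⟨?_, ?_, ?_⟩
  · -- T preserves the span
    intro ξ hξ
    induction hξ using Submodule.span_induction with
    | mem y hy =>
        obtain ⟨c', hc', v, rfl⟩ := hy
        obtain ⟨m, cs, As, hcs, hdec⟩ := hTps c' hc'
        have hTv : T (c' v) = ∑ i, cs i (As i v) := by
          have := ContinuousLinearMap.ext_iff.mp hdec v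
          simpa using this
        rw [hTv]
        exact Submodule.sum_mem _ fun i _ =>
          Submodule.subset_span ⟨cs i, hcs i, As i v, rfl⟩
    | zero => simp only [map_zero]; exact Submodule.zero_mem _
    | add x y hx hy ihx ihy => rw [map_add]; exact Submodule.add_mem _ ihx ihy
    | smul a x hx ihx => rw [T.map_smul]; exact Submodule.smul_mem _ a ihx
  · -- T is a module map
    intro ξ _ a ha
    apply ext_inner_left ℂ
    intro η'
    calc (inner ℂ η' (T (act ξ a)) : ℂ)
        = inner ℂ (ContinuousLinearMap.adjoint T η') (act ξ a) :=
          (ContinuousLinearMap.adjoint_inner_left _ _ _).symm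
      _ = psi n Km c ((θ⁻¹ * S a * (θ⁻¹ * θ⁻¹)) *
            TU n tm U (ContinuousLinearMap.adjoint T η') ξ) := hact ξ a ha _
      _ = psi n Km c ((θ⁻¹ * S a * (θ⁻¹ * θ⁻¹)) * TU n tm U η' (T ξ)) := by
          rw [hTU1]
      _ = inner ℂ η' (act (T ξ) a) := (hact (T ξ) a ha η').symm
  · -- symmetry of the Â₀-valued inner ℂ product
    intro hT ξ η _ _
    have hadj : ContinuousLinearMap.adjoint T = T := hT.adjoint_eq
    have : TU n tm U (T ξ) η = TU n tm U ξ (T η) := by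
      have := hTU1 ξ η
      rw [hadj] at this
      rw [this]
    rw [this]

end DQG

end
end
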